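/- (Multivariate Leibniz rule for divided differences) For functions φ_1, …, φ_N and distinct points x_{ℓ_1}, …, x_{ℓ_2}, the divided difference of the product satisfies [x_{ℓ_1},…,x_{ℓ_2}](φ_1 φ_2 ⋯ φ_N) = Σ over chains ℓ_1 = α_0 ≤ α_1 ≤ ⋯ ≤ α_N = ℓ_2 of ∏_{β=0}^{N−1} [x_{α_β},…,x_{α_{β+1}}](φ_{β+1}). -/

import Mathlib

/-- Auxiliary: divided difference over points `x m, …, x (m+g)`. -/
noncomputable def ddAux (x : ℕ → ℂ) (f : ℂ → ℂ) : ℕ → ℕ → ℂ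
  | 0, m => f (x m)
  | g + 1, m => (ddAux x f g m - ddAux x f g (m + 1)) / (x m - x (m + (g + 1)))

/-- Newton divided difference `[x_m, …, x_j] f`. -/
noncomputable def dd (x : ℕ → ℂ) (f : ℂ → ℂ) (m j : ℕ) : ℂ := ddAux x f (j - m) m

/-- Modified divided difference `⟨x_m, …, x_j⟩ f`. -/
noncomputable def mdd (x : ℕ → ℂ) (f : ℂ → ℂ) (m j : ℕ) : ℂ :=
  if m < j then
    (x m + x (m + 1)) *
      dd x (fun z => f z * ∏ k ∈ Finset.Icc (m + 2) j, (x k + z)) m j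
  else f (x j)

/-! The two-factor rule holds because its right-hand side
`Σ_{ℓ=m}^{j} [x_m,…,x_ℓ]f · [x_ℓ,…,x_j]g` satisfies the recurrence defining divided differences
of `fg`, with the same values on single points. For `N` factors, peel off the last one: the
two-factor rule and induction on `N` give a sum over chains `ℓ₁ ≤ ⋯ ≤ ℓ` followed by one last
step from `ℓ` to `ℓ₂`, and appending `ℓ₂` enumerates every chain from `ℓ₁` to `ℓ₂` exactly once.
For `N = 0` both sides are the Kronecker delta of `ℓ₁` and `ℓ₂`. -/

open Finset

section DividedDifferences

variable (x : ℕ → ℂ) (f g : ℂ → ℂ)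

lemma dd_self (m : ℕ) : dd x f m m = f (x m) := by
  simp [dd, ddAux]

lemma ddAux_const (c : ℂ) (n m : ℕ) : ddAux x (fun _ => c) n m = if n = 0 then c else 0 := by
  induction n generalizing m with
  | zero => rfl
  | succ n ih => simp [ddAux, ih]

lemma dd_const (c : ℂ) (m j : ℕ) : dd x (fun _ => c) m j = if j ≤ m then c else 0 := by
  simp [dd, ddAux_const, Nat.sub_eq_zero_iff_le]

lemma dd_sub_dd_succ {m j : ℕ} (h : m ≤ j) (hx : x m ≠ x (j + 1)) :
    dd x f m j - dd x f (m + 1) (j + 1) = (x m - x (j + 1)) * dd x f m (j + 1) := by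
  have hlen : j + 1 - m = j - m + 1 := by omega
  have hend : m + (j - m + 1) = j + 1 := by omega
  rw [dd, dd, dd, hlen, Nat.add_sub_add_right, ddAux, hend, mul_div_cancel₀ _ (sub_ne_zero.2 hx)]

lemma sum_Icc_add_one_add_one {M : Type*} [AddCommMonoid M] (F : ℕ → M) (m j : ℕ) :
    ∑ ℓ ∈ Icc (m + 1) (j + 1), F ℓ = ∑ ℓ ∈ Icc m j, F (ℓ + 1) := by
  rw [← map_add_right_Icc, sum_map]
  rfl

lemma sum_dd_mul_dd_sub {m j : ℕ} (h : m ≤ j) (hx : Set.InjOn x (Set.Icc m (j + 1))) :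
    ∑ ℓ ∈ Icc m j, dd x f m ℓ * dd x g ℓ j
        - ∑ ℓ ∈ Icc (m + 1) (j + 1), dd x f (m + 1) ℓ * dd x g ℓ (j + 1)
      = (x m - x (j + 1)) * ∑ ℓ ∈ Icc m (j + 1), dd x f m ℓ * dd x g ℓ (j + 1) := by
  set T : ℕ → ℂ := fun ℓ => dd x f m ℓ * dd x g ℓ (j + 1)
  have hne : ∀ {i k}, i ∈ Icc m (j + 1) → k ∈ Icc m (j + 1) → i ≠ k → x i ≠ x k :=
    fun hi hk => hx.ne (by simpa using hi) (by simpa using hk)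
  have hg : ∀ ℓ ∈ Icc m j,
      dd x g ℓ j = dd x g (ℓ + 1) (j + 1) + (x ℓ - x (j + 1)) * dd x g ℓ (j + 1) := by
    intro ℓ hℓ
    rw [mem_Icc] at hℓ
    rw [← dd_sub_dd_succ x g hℓ.2 (hne (by simp; omega) (by simp; omega) (by omega))]
    ring
  have hf : ∀ ℓ ∈ Icc m j,
      dd x f (m + 1) (ℓ + 1) = dd x f m ℓ - (x m - x (ℓ + 1)) * dd x f m (ℓ + 1) := by
    intro ℓ hℓ
    rw [mem_Icc] at hℓ
    rw [← dd_sub_dd_succ x f hℓ.1 (hne (by simp; omega) (by simp; omega) (by omega))]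
    ring
  have top : ∑ ℓ ∈ Icc m (j + 1), (x ℓ - x (j + 1)) * T ℓ
      = ∑ ℓ ∈ Icc m j, (x ℓ - x (j + 1)) * T ℓ := by
    simp [sum_Icc_succ_top (Nat.le_succ_of_le h)]
  have bot : ∑ ℓ ∈ Icc m (j + 1), (x m - x ℓ) * T ℓ
      = ∑ ℓ ∈ Icc m j, (x m - x (ℓ + 1)) * T (ℓ + 1) := by
    rw [← sum_Ioc_add_eq_sum_Icc (by omega), ← Icc_add_one_left_eq_Ioc, sum_Icc_add_one_add_one]
    simp
  calc _ = ∑ ℓ ∈ Icc m j, ((x ℓ - x (j + 1)) * T ℓ + (x m - x (ℓ + 1)) * T (ℓ + 1)) := by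
        rw [sum_Icc_add_one_add_one, ← sum_sub_distrib]
        refine sum_congr rfl fun ℓ hℓ => ?_
        rw [hf ℓ hℓ, hg ℓ hℓ]
        ring
    _ = ∑ ℓ ∈ Icc m (j + 1), ((x ℓ - x (j + 1)) * T ℓ + (x m - x ℓ) * T ℓ) := by
        rw [sum_add_distrib, sum_add_distrib, top, bot]
    _ = _ := by
        rw [mul_sum]
        exact sum_congr rfl fun ℓ _ => by ring

theorem dd_mul {m j : ℕ} (h : m ≤ j) (hx : Set.InjOn x (Set.Icc m j)) :
    dd x (fun z => f z * g z) m j = ∑ ℓ ∈ Icc m j, dd x f m ℓ * dd x g ℓ j := by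
  obtain ⟨n, rfl⟩ := Nat.exists_eq_add_of_le h
  clear h
  induction n generalizing m with
  | zero => simp [dd_self]
  | succ n ih =>
    rw [← add_assoc] at hx ⊢
    have hne : x m ≠ x (m + n + 1) :=
      hx.ne (Set.left_mem_Icc.2 (by omega)) (Set.right_mem_Icc.2 (by omega)) (by omega)
    have hshift : m + n + 1 = m + 1 + n := by omega
    refine mul_left_cancel₀ (sub_ne_zero.2 hne) ?_
    rw [← dd_sub_dd_succ x _ le_self_add hne, ← sum_dd_mul_dd_sub x f g le_self_add hx,
      ih (hx.mono (Set.Icc_subset_Icc_right (by omega))), hshift,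
      ih (m := m + 1) (hx.mono (Set.Icc_subset_Icc (by omega) (by omega)))]

end DividedDifferences

lemma Fin.monotone_snoc_iff {α : Type*} [Preorder α] {n : ℕ} {a : Fin (n + 1) → α} {y : α} :
    Monotone (Fin.snoc a y : Fin (n + 2) → α) ↔ Monotone a ∧ a (Fin.last n) ≤ y := by
  simp [Fin.monotone_iff_le_succ, Fin.forall_fin_succ', Fin.succ_castSucc, -Fin.castSucc_succ]

section Chains

def monotoneChains (N m j : ℕ) : Finset (Fin (N + 1) → ℕ) :=
  (Fintype.piFinset fun _ : Fin (N + 1) => Icc m j).filter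
    (fun a => a 0 = m ∧ a (Fin.last N) = j ∧ ∀ i : Fin N, a i.castSucc ≤ a i.succ)

variable {N m j : ℕ}

lemma mem_monotoneChains {a : Fin (N + 1) → ℕ} :
    a ∈ monotoneChains N m j ↔ a 0 = m ∧ a (Fin.last N) = j ∧ Monotone a := by
  simp only [monotoneChains, mem_filter, Fintype.mem_piFinset, mem_Icc,
    ← Fin.monotone_iff_le_succ]
  refine ⟨fun h => h.2, fun ⟨h0, hN, hmono⟩ => ⟨fun i => ⟨?_, ?_⟩, h0, hN, hmono⟩⟩
  · exact h0 ▸ hmono (Fin.zero_le i)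
  · exact hN ▸ hmono (Fin.le_last i)

lemma monotoneChains_zero : monotoneChains 0 m j = if m = j then {fun _ => m} else ∅ := by
  ext a
  split_ifs with h
  · subst h
    simp [mem_monotoneChains, funext_iff, Fin.forall_fin_one, Subsingleton.monotone]
  · simp [mem_monotoneChains]
    omega

lemma sum_monotoneChains_succ {M : Type*} [AddCommMonoid M] (F : (Fin (N + 2) → ℕ) → M) :
    ∑ a ∈ monotoneChains (N + 1) m j, F a
      = ∑ ℓ ∈ Icc m j, ∑ a ∈ monotoneChains N m ℓ, F (Fin.snoc a j) := by
  rw [sum_sigma']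
  refine (sum_bij' (fun p _ => Fin.snoc p.2 j) (fun b _ => ⟨b (Fin.last N).castSucc, Fin.init b⟩)
    ?_ ?_ ?_ ?_ fun _ _ => rfl).symm
  · rintro ⟨ℓ, a⟩ hp
    simp only [mem_sigma, mem_Icc, mem_monotoneChains] at hp ⊢
    obtain ⟨⟨-, hℓj⟩, h0, hlast, hmono⟩ := hp
    refine ⟨?_, Fin.snoc_last _ _, Fin.monotone_snoc_iff.2 ⟨hmono, hlast ▸ hℓj⟩⟩
    exact (Fin.snoc_castSucc (α := fun _ => ℕ) (i := 0) ..).trans h0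
  · intro b hb
    simp only [mem_sigma, mem_Icc, mem_monotoneChains] at hb ⊢
    obtain ⟨h0, hlast, hmono⟩ := hb
    exact ⟨⟨h0 ▸ hmono (Fin.zero_le _), hlast ▸ hmono (Fin.le_last _)⟩, h0, rfl,
      hmono.comp Fin.strictMono_castSucc.monotone⟩
  · rintro ⟨ℓ, a⟩ hp
    simp only [mem_sigma, mem_monotoneChains] at hp
    simp [Fin.init_snoc, hp.2.2.1]
  · intro b hb
    rw [← (mem_monotoneChains.1 hb).2.1]
    exact Fin.snoc_init_self b

end Chains

theorem dd_prod_eq_sum_monotoneChains (x : ℕ → ℂ) (φ : ℕ → ℂ → ℂ) (N : ℕ) {m j : ℕ}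
    (h : m ≤ j) (hx : Set.InjOn x (Set.Icc m j)) :
    dd x (fun z => ∏ β ∈ range N, φ (β + 1) z) m j
      = ∑ a ∈ monotoneChains N m j, ∏ β : Fin N, dd x (φ (β + 1)) (a β.castSucc) (a β.succ) := by
  induction N generalizing j with
  | zero =>
    rcases h.lt_or_eq with h | rfl
    · simp [dd_const, monotoneChains_zero, h.ne, h.not_ge]
    · simp [dd_self, monotoneChains_zero]
  | succ N ih =>
    simp_rw [prod_range_succ]
    rw [dd_mul x _ _ h hx, sum_monotoneChains_succ]
    refine sum_congr rfl fun ℓ hℓ => ?_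
    rw [mem_Icc] at hℓ
    rw [ih hℓ.1 (hx.mono (Set.Icc_subset_Icc_right hℓ.2)), sum_mul]
    refine sum_congr rfl fun a ha => ?_
    rw [Fin.prod_univ_castSucc]
    simp [Fin.succ_castSucc, -Fin.castSucc_succ, (mem_monotoneChains.1 ha).2.1]

theorem dd_multi_leibniz_general (x : ℕ → ℂ) (N : ℕ)
    (ℓ₁ ℓ₂ : ℕ) (hℓ : ℓ₁ ≤ ℓ₂)
    (hdist : ∀ i j, ℓ₁ ≤ i → i ≤ ℓ₂ → ℓ₁ ≤ j → j ≤ ℓ₂ → i ≠ j → x i ≠ x j)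
    (φ : ℕ → ℂ → ℂ) :
    dd x (fun z => ∏ β ∈ Finset.range N, φ (β + 1) z) ℓ₁ ℓ₂
      = ∑ a ∈ (Fintype.piFinset fun _ : Fin (N + 1) => Finset.Icc ℓ₁ ℓ₂).filter
          (fun a => a 0 = ℓ₁ ∧ a (Fin.last N) = ℓ₂ ∧
            ∀ i : Fin N, a i.castSucc ≤ a i.succ),
        ∏ β : Fin N, dd x (φ (β + 1)) (a β.castSucc) (a β.succ) :=
  dd_prod_eq_sum_monotoneChains x φ N hℓ fun i hi k hk hxik =>
    by_contra fun hik => hdist i k hi.1 hi.2 hk.1 hk.2 hik hxik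

/-- Multivariate Leibniz rule for divided differences. -/
theorem dd_multi_leibniz (x : ℕ → ℂ) (N : ℕ) (hN : 1 ≤ N)
    (ℓ₁ ℓ₂ : ℕ) (hℓ : ℓ₁ ≤ ℓ₂)
    (hdist : ∀ i j, ℓ₁ ≤ i → i ≤ ℓ₂ → ℓ₁ ≤ j → j ≤ ℓ₂ → i ≠ j → x i ≠ x j)
    (φ : ℕ → ℂ → ℂ) :
    dd x (fun z => ∏ β ∈ Finset.range N, φ (β + 1) z) ℓ₁ ℓ₂
      = ∑ a ∈ (Fintype.piFinset fun _ : Fin (N + 1) => Finset.Icc ℓ₁ ℓ₂).filter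
          (fun a => a 0 = ℓ₁ ∧ a (Fin.last N) = ℓ₂ ∧
            ∀ i : Fin N, a i.castSucc ≤ a i.succ),
        ∏ β : Fin N, dd x (φ (β + 1)) (a β.castSucc) (a β.succ) :=
  dd_multi_leibniz_general x N ℓ₁ ℓ₂ hℓ hdist φ
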